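/- The function J′ is well defined (i.e. the defining integral converges absolutely) and bounded on [0, +∞) if and only if the following three conditions hold: q = 0, the support of ν is contained in [0, +∞), and ∫_{(0,∞)} y ν(dy) < ∞. -/

import Mathlib

/-!
Subtracting `J′(0)` gives `J′(z) - J′(0) = q z + ∫ y (1 - e^{-zy}) ν(dy)`, an integrand that is
nonnegative and nondecreasing in `z`. For `y < 0` it is at least `z y²`, and for `y > 0` it
increases to `y`. A bound on `J′` therefore forces `q = 0` and, by monotone convergence,
`ν (-∞, 0) = 0` and `∫_{(0,∞)} y ν(dy) < ∞`. Conversely, under these conditions the integrand of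
`J′(z)` is bounded by `y` ν-a.e., which gives integrability and `|J′(z)| ≤ |a| + ∫_{(0,∞)} y ν(dy)`.
-/

open MeasureTheory

/-- The topological support of a measure on `ℝ`: the set of points all of whose
open neighborhoods have positive measure. -/
def measureSupport (ν : Measure ℝ) : Set ℝ :=
  {x : ℝ | ∀ U : Set ℝ, IsOpen U → x ∈ U → ν U ≠ 0}

/-- The derivative of the Laplace exponent:
`J′(z) = −a + qz + ∫ y (𝟙_{(−1,1)}(y) − e^{−zy}) ν(dy)`. -/
noncomputable def Jprime (ν : Measure ℝ) (a q : ℝ) (z : ℝ) : ℝ :=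
  -a + q * z + ∫ y, y * ((Set.Ioo (-1 : ℝ) 1).indicator 1 y - Real.exp (-(z * y))) ∂ν

open Filter Set Topology Real

lemma measureSupport_eq_support (ν : Measure ℝ) : measureSupport ν = ν.support := by
  ext x
  simp only [measureSupport, Measure.support_eq_forall_isOpen, mem_ofPred_eq, pos_iff_ne_zero]
  exact forall_congr' fun U => imp.swap

lemma measureSupport_subset_iff {ν : Measure ℝ} {t : Set ℝ} (ht : IsClosed t) :
    measureSupport ν ⊆ t ↔ ν tᶜ = 0 := by
  rw [measureSupport_eq_support]
  exact ⟨fun h => measure_mono_null (compl_subset_compl.mpr h) ν.measure_compl_support,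
    fun h => ν.support_subset_of_isClosed ht (mem_ae_iff.mpr h)⟩

lemma eq_zero_of_forall_mul_le {q M : ℝ} (hq : 0 ≤ q) (h : ∀ z, 0 ≤ z → q * z ≤ M) : q = 0 := by
  by_contra hq0
  have hqpos : 0 < q := hq.lt_of_ne' hq0
  have := h ((|M| + 1) / q) (by positivity)
  rw [mul_div_cancel₀ _ hqpos.ne'] at this
  linarith [le_abs_self M]

lemma lintegral_iSup_ofReal_le {α : Type*} [MeasurableSpace α] {μ : Measure α} {f : ℕ → α → ℝ} {M : ℝ} (hf : ∀ n, Integrable (f n) μ)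
    (hf_nonneg : ∀ n, 0 ≤ᵐ[μ] f n) (hf_mono : Monotone f) (hM : ∀ n, ∫ x, f n x ∂μ ≤ M) :
    ∫⁻ x, ⨆ n, ENNReal.ofReal (f n x) ∂μ ≤ ENNReal.ofReal M := by
  rw [lintegral_iSup' (fun n => (hf n).aemeasurable.ennreal_ofReal)
    (ae_of_all _ fun x m n hmn => ENNReal.ofReal_le_ofReal (hf_mono hmn x))]
  refine iSup_le fun n => ?_
  rw [← ofReal_integral_eq_lintegral_ofReal (hf n) (hf_nonneg n)]
  exact ENNReal.ofReal_le_ofReal (hM n)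

noncomputable def jprimeIntegrand (z y : ℝ) : ℝ :=
  y * ((Ioo (-1 : ℝ) 1).indicator 1 y - exp (-(z * y)))

noncomputable def jprimeIncrement (z y : ℝ) : ℝ :=
  y * (1 - exp (-(z * y)))

lemma measurable_jprimeIntegrand (z : ℝ) : Measurable (jprimeIntegrand z) :=
  measurable_id.mul ((measurable_one.indicator measurableSet_Ioo).sub (by fun_prop))

lemma abs_jprimeIntegrand_le {z y : ℝ} (hz : 0 ≤ z) (hy : 0 ≤ y) : |jprimeIntegrand z y| ≤ y := by
  have hexp : exp (-(z * y)) ≤ 1 := exp_le_one_iff.mpr (by nlinarith)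
  have hind : (Ioo (-1 : ℝ) 1).indicator 1 y ∈ Icc (0 : ℝ) 1 := by
    by_cases h : y ∈ Ioo (-1 : ℝ) 1 <;> simp [h]
  have hfactor : |(Ioo (-1 : ℝ) 1).indicator 1 y - exp (-(z * y))| ≤ 1 :=
    abs_le.mpr ⟨by linarith [hind.1], by linarith [hind.2, exp_pos (-(z * y))]⟩
  rw [jprimeIntegrand, abs_mul, abs_of_nonneg hy]
  exact mul_le_of_le_one_right hy hfactor

lemma jprimeIntegrand_sub_jprimeIntegrand_zero (z y : ℝ) :
    jprimeIntegrand z y - jprimeIntegrand 0 y = jprimeIncrement z y := by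
  simp only [jprimeIntegrand, jprimeIncrement, zero_mul, neg_zero, exp_zero]
  ring

lemma monotone_jprimeIncrement (y : ℝ) : Monotone fun z => jprimeIncrement z y := by
  intro z w hzw
  suffices y * exp (-(w * y)) ≤ y * exp (-(z * y)) by simp only [jprimeIncrement]; linarith
  rcases le_total 0 y with hy | hy
  · exact mul_le_mul_of_nonneg_left (exp_le_exp.mpr (by nlinarith)) hy
  · exact mul_le_mul_of_nonpos_left (exp_le_exp.mpr (by nlinarith)) hy

lemma jprimeIncrement_nonneg {z : ℝ} (hz : 0 ≤ z) (y : ℝ) : 0 ≤ jprimeIncrement z y := by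
  simpa [jprimeIncrement] using monotone_jprimeIncrement y hz

lemma mul_sq_le_jprimeIncrement {y : ℝ} (hy : y ≤ 0) (z : ℝ) : z * y ^ 2 ≤ jprimeIncrement z y := by
  have := add_one_le_exp (-(z * y))
  simp only [jprimeIncrement]
  nlinarith

lemma tendsto_jprimeIncrement_atTop {y : ℝ} (hy : 0 < y) :
    Tendsto (fun z => jprimeIncrement z y) atTop (𝓝 y) := by
  have hexp : Tendsto (fun z => exp (-(z * y))) atTop (𝓝 0) :=
    tendsto_exp_atBot.comp (tendsto_neg_atTop_atBot.comp (tendsto_id.atTop_mul_const hy))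
  simpa [jprimeIncrement] using ((tendsto_const_nhds (x := (1 : ℝ))).sub hexp).const_mul y

lemma iSup_ofReal_jprimeIncrement_eq_top {y : ℝ} (hy : y < 0) :
    ⨆ n : ℕ, ENNReal.ofReal (jprimeIncrement n y) = ⊤ := by
  refine ENNReal.eq_top_of_forall_nnreal_le fun r => ?_
  obtain ⟨n, hn⟩ := exists_nat_gt (r / y ^ 2)
  calc (r : ENNReal) = ENNReal.ofReal r := (ENNReal.ofReal_coe_nnreal).symm
    _ ≤ ENNReal.ofReal (jprimeIncrement n y) := by
      refine ENNReal.ofReal_le_ofReal ((le_of_lt ?_).trans (mul_sq_le_jprimeIncrement hy.le n))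
      exact (div_lt_iff₀ (by nlinarith)).mp hn
    _ ≤ _ := le_iSup (fun n : ℕ => ENNReal.ofReal (jprimeIncrement n y)) n

lemma ofReal_le_iSup_ofReal_jprimeIncrement {y : ℝ} (hy : 0 < y) :
    ENNReal.ofReal y ≤ ⨆ n : ℕ, ENNReal.ofReal (jprimeIncrement n y) :=
  le_of_tendsto' ((ENNReal.continuous_ofReal.tendsto y).comp
    ((tendsto_jprimeIncrement_atTop hy).comp tendsto_natCast_atTop_atTop))
    fun n => le_iSup (fun n : ℕ => ENNReal.ofReal (jprimeIncrement n y)) n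

lemma measure_Iio_eq_zero_and_integrableOn_Ioi {ν : Measure ℝ} {M : ℝ}
    (hint : ∀ n : ℕ, Integrable (jprimeIncrement n) ν)
    (hM : ∀ n : ℕ, ∫ y, jprimeIncrement n y ∂ν ≤ M) :
    ν (Iio 0) = 0 ∧ IntegrableOn (fun y => y) (Ioi 0) ν := by
  set G : ℝ → ENNReal := fun y => ⨆ n : ℕ, ENNReal.ofReal (jprimeIncrement n y)
  have hG : ∫⁻ y, G y ∂ν ≠ ⊤ := ne_top_of_le_ne_top ENNReal.ofReal_ne_top <|
    lintegral_iSup_ofReal_le hint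
      (fun n => ae_of_all _ (jprimeIncrement_nonneg n.cast_nonneg))
      (fun m n hmn y => monotone_jprimeIncrement y (Nat.cast_le.mpr hmn)) hM
  have hG_meas : AEMeasurable G ν :=
    AEMeasurable.iSup fun n => (hint n).aemeasurable.ennreal_ofReal
  refine ⟨measure_mono_null (fun y hy => ?_) (ae_iff.mp (ae_lt_top' hG_meas hG)), ?_⟩
  · simp [G, iSup_ofReal_jprimeIncrement_eq_top (mem_Iio.mp hy)]
  · refine ⟨measurable_id.aestronglyMeasurable, ?_⟩
    calc ∫⁻ y in Ioi 0, ‖y‖ₑ ∂ν ≤ ∫⁻ y in Ioi 0, G y ∂ν :=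
          setLIntegral_mono_ae' measurableSet_Ioi (ae_of_all _ fun y hy => by
            rw [Real.enorm_of_nonneg hy.le]
            exact ofReal_le_iSup_ofReal_jprimeIncrement hy)
      _ ≤ ∫⁻ y, G y ∂ν := setLIntegral_le_lintegral _ _
      _ < ⊤ := hG.lt_top

lemma jprime_sub_jprime_zero {ν : Measure ℝ} (a q : ℝ) {z : ℝ}
    (hz : Integrable (jprimeIntegrand z) ν) (h0 : Integrable (jprimeIntegrand 0) ν) :
    Jprime ν a q z - Jprime ν a q 0 = q * z + ∫ y, jprimeIncrement z y ∂ν := by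
  have hinc : ∫ y, jprimeIncrement z y ∂ν
      = ∫ y, jprimeIntegrand z y ∂ν - ∫ y, jprimeIntegrand 0 y ∂ν := by
    simp only [← integral_sub hz h0, jprimeIntegrand_sub_jprimeIntegrand_zero]
  rw [hinc]
  simp only [Jprime, jprimeIntegrand]
  ring

lemma ae_norm_jprimeIntegrand_le {ν : Measure ℝ} (hneg : ν (Iio 0) = 0) {z : ℝ} (hz : 0 ≤ z) :
    ∀ᵐ y ∂ν, ‖jprimeIntegrand z y‖ ≤ (Ioi 0).indicator (fun y => y) y := by
  filter_upwards [measure_eq_zero_iff_ae_notMem.mp hneg] with y (hy : ¬y < 0)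
  rcases (not_lt.mp hy).lt_or_eq with hpos | rfl
  · rw [indicator_of_mem (mem_Ioi.mpr hpos), Real.norm_eq_abs]
    exact abs_jprimeIntegrand_le hz hpos.le
  · simp [jprimeIntegrand]

theorem jprime_bounded_iff_general (ν : Measure ℝ) (a q : ℝ) (hq : 0 ≤ q) :
    ((∀ z : ℝ, 0 ≤ z →
        Integrable (fun y => y * ((Set.Ioo (-1 : ℝ) 1).indicator 1 y - Real.exp (-(z * y)))) ν) ∧
      ∃ C : ℝ, ∀ z : ℝ, 0 ≤ z → |Jprime ν a q z| ≤ C) ↔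
    (q = 0 ∧ measureSupport ν ⊆ Set.Ici 0 ∧ IntegrableOn (fun y => y) (Set.Ioi 0) ν) := by
  rw [measureSupport_subset_iff isClosed_Ici, compl_Ici]
  constructor
  · rintro ⟨hint, C, hC⟩
    have hbound : ∀ z, 0 ≤ z → q * z + ∫ y, jprimeIncrement z y ∂ν ≤ 2 * C := fun z hz => by
      rw [← jprime_sub_jprime_zero a q (hint z hz) (hint 0 le_rfl)]
      linarith [abs_le.mp (hC z hz), abs_le.mp (hC 0 le_rfl)]
    have hinc : ∀ z, 0 ≤ z → Integrable (jprimeIncrement z) ν := fun z hz =>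
      ((hint z hz).sub (hint 0 le_rfl)).congr
        (ae_of_all _ (jprimeIntegrand_sub_jprimeIntegrand_zero z))
    have hq0 : q = 0 := eq_zero_of_forall_mul_le hq fun z hz =>
      (le_add_of_nonneg_right (integral_nonneg (jprimeIncrement_nonneg hz))).trans (hbound z hz)
    exact ⟨hq0, measure_Iio_eq_zero_and_integrableOn_Ioi (fun n => hinc n n.cast_nonneg)
      fun n => (le_add_of_nonneg_left (mul_nonneg hq n.cast_nonneg)).trans (hbound n n.cast_nonneg)⟩
  · rintro ⟨rfl, hneg, hpos⟩
    have hg := hpos.integrable_indicator measurableSet_Ioi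
    refine ⟨fun z hz => hg.mono' (measurable_jprimeIntegrand z).aestronglyMeasurable
      (ae_norm_jprimeIntegrand_le hneg hz), |a| + ∫ y, (Ioi 0).indicator (fun y => y) y ∂ν,
      fun z hz => ?_⟩
    have hint := norm_integral_le_of_norm_le hg (ae_norm_jprimeIntegrand_le hneg hz)
    simp only [Jprime, zero_mul, add_zero]
    exact (abs_add_le _ _).trans (add_le_add (abs_neg a).le hint)

/-- `J′` is well defined and bounded on `[0,∞)` iff `q = 0`, `supp ν ⊆ [0,∞)` and
`∫_{(0,∞)} y ν(dy) < ∞`. -/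
theorem jprime_bounded_iff (ν : Measure ℝ) (a q : ℝ) (hq : 0 ≤ q)
    (hν : ∫⁻ y, ENNReal.ofReal (min (y ^ 2) 1) ∂ν < ⊤) :
    ((∀ z : ℝ, 0 ≤ z →
        Integrable (fun y => y * ((Set.Ioo (-1 : ℝ) 1).indicator 1 y - Real.exp (-(z * y)))) ν) ∧
      ∃ C : ℝ, ∀ z : ℝ, 0 ≤ z → |Jprime ν a q z| ≤ C) ↔
    (q = 0 ∧ measureSupport ν ⊆ Set.Ici 0 ∧ IntegrableOn (fun y => y) (Set.Ioi 0) ν) :=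
  jprime_bounded_iff_general ν a q hq
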